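/- arXiv:2304.07210 — 5 statements merged into one kernel-verified Lean document; each statement's English description precedes it below -/
import Mathlib

section
/- Suppose the representation matrix P ∈ [0,1]^{n×m} (row-stochastic) satisfies (ε,δ)-local differential privacy: for all users i, j and every subset E of representations, Σ_{o∈E} P[i,o] ≤ δ + e^ε · Σ_{o∈E} P[j,o]. Then Σ_{o=1}^m max_{i∈[n]} P[i,o] ≤ e^ε + min(n,m)·δ. Consequently any attacker's re-identification accuracy in the random-user setting is at most (e^ε + min(n,m)·δ)/n. -/
/-- If the row-stochastic representation matrix `P` satisfies
`(ε,δ)`-local differential privacy, then `‖P‖_{∞,1} ≤ e^ε + min(n,m)·δ`,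
and hence any attacker's random-user accuracy is at most
`(e^ε + min(n,m)·δ)/n`. -/
theorem stmt_3 (n m : ℕ) (hn : 0 < n)
    (P : Fin n → Fin m → ℝ)
    (hPnn : ∀ i o, 0 ≤ P i o) (hProw : ∀ i, ∑ o, P i o = 1)
    (ε δ : ℝ) (hδ : 0 ≤ δ)
    (hLDP : ∀ i j : Fin n, ∀ E : Finset (Fin m),
      ∑ o ∈ E, P i o ≤ δ + Real.exp ε * ∑ o ∈ E, P j o) :
    (∑ o, ⨆ i, P i o ≤ Real.exp ε + min (n : ℝ) m * δ) ∧
    (∀ A : Fin n → Fin m → ℝ, (∀ i o, 0 ≤ A i o) → (∀ o, ∑ i, A i o = 1) →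
      (n : ℝ)⁻¹ * ∑ i, ∑ o, P i o * A i o
        ≤ (Real.exp ε + min (n : ℝ) m * δ) / n) := by
  have _inst : Nonempty (Fin n) := ⟨⟨0, hn⟩⟩
  have hbdd : ∀ o : Fin m, BddAbove (Set.range fun i => P i o) :=
    fun o => Set.Finite.bddAbove (Set.finite_range _)
  have hc : ∀ o : Fin m, ∃ i : Fin n, (⨆ k, P k o) = P i o := by
    intro o
    obtain ⟨i, -, hi⟩ := Finset.exists_max_image Finset.univ (fun k => P k o)
      ⟨⟨0, hn⟩, Finset.mem_univ _⟩
    exact ⟨i, le_antisymm (ciSup_le fun k => hi k (Finset.mem_univ k)) (le_ciSup (hbdd o) i)⟩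
  choose c hcspec using hc
  set j0 : Fin n := ⟨0, hn⟩ with hj0
  have hsup : ∑ o, ⨆ i, P i o = ∑ o, P (c o) o := by
    exact Finset.sum_congr rfl fun o _ => hcspec o
  have key : ∑ o, ⨆ i, P i o ≤ Real.exp ε + min (n : ℝ) m * δ := by
    rcases le_total (n:ℝ) m with h | h
    · rw [min_eq_left h]
      have hpart : ∑ o, P (c o) o
          = ∑ i : Fin n, ∑ o ∈ Finset.univ.filter (fun o => c o = i), P (c o) o :=
        (Finset.sum_fiberwise Finset.univ c (fun o => P (c o) o)).symm
      have hstep : ∀ i : Fin n,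
          ∑ o ∈ Finset.univ.filter (fun o => c o = i), P (c o) o
            ≤ δ + Real.exp ε * ∑ o ∈ Finset.univ.filter (fun o => c o = i), P j0 o := by
        intro i
        have : ∑ o ∈ Finset.univ.filter (fun o => c o = i), P (c o) o
            = ∑ o ∈ Finset.univ.filter (fun o => c o = i), P i o := by
          refine Finset.sum_congr rfl fun o ho => ?_
          rw [(Finset.mem_filter.mp ho).2]
        rw [this]
        exact hLDP i j0 _
      calc ∑ o, ⨆ i, P i o = _ := hsup.trans hpart
        _ ≤ ∑ i : Fin n, (δ + Real.exp ε * ∑ o ∈ Finset.univ.filter (fun o => c o = i), P j0 o) :=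
            Finset.sum_le_sum fun i _ => hstep i
        _ = n * δ + Real.exp ε * ∑ i : Fin n,
              ∑ o ∈ Finset.univ.filter (fun o => c o = i), P j0 o := by
            rw [Finset.sum_add_distrib, ← Finset.mul_sum]
            simp [mul_comm]
        _ = n * δ + Real.exp ε * 1 := by
            rw [Finset.sum_fiberwise Finset.univ c (fun o => P j0 o), hProw]
        _ = Real.exp ε + (n:ℝ) * δ := by ring
    · rw [min_eq_right h]
      calc ∑ o, ⨆ i, P i o = ∑ o, P (c o) o := hsup
        _ ≤ ∑ o : Fin m, (δ + Real.exp ε * P j0 o) := by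
            refine Finset.sum_le_sum fun o _ => ?_
            have := hLDP (c o) j0 {o}
            simpa using this
        _ = m * δ + Real.exp ε * ∑ o, P j0 o := by
            rw [Finset.sum_add_distrib, ← Finset.mul_sum]
            simp [mul_comm]
        _ = Real.exp ε + (m:ℝ) * δ := by rw [hProw]; ring
  refine ⟨key, fun A hAnn hAcol => ?_⟩
  have hacc : ∑ i, ∑ o, P i o * A i o ≤ Real.exp ε + min (n : ℝ) m * δ := by
    rw [Finset.sum_comm]
    calc ∑ o, ∑ i, P i o * A i o
        ≤ ∑ o : Fin m, ∑ i, (⨆ k, P k o) * A i o := by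
          refine Finset.sum_le_sum fun o _ => Finset.sum_le_sum fun i _ => ?_
          exact mul_le_mul_of_nonneg_right (le_ciSup (hbdd o) i) (hAnn i o)
      _ = ∑ o, ⨆ k, P k o := by
          refine Finset.sum_congr rfl fun o _ => ?_
          rw [← Finset.mul_sum, hAcol o, mul_one]
      _ ≤ _ := key
  rw [div_eq_inv_mul]
  exact mul_le_mul_of_nonneg_left hacc (by positivity)
end

section
/- Let P be an n×m row-stochastic matrix. In the matching setting, sample a uniformly random permutation π of [n] and independent representations O_1,...,O_n with O_i distributed as P[π(i),·]. Then for any matching rule φ : O^n → [n]^n that is a function of (O_1,...,O_n), the expected fraction of indices i with φ^i(O_{1:n}) = π(i) is at most (1/n)·E[number of distinct values among O_1,...,O_n], which equals (1/n)·Σ_{o=1}^m (1 − Π_{i=1}^n (1 − P[i,o])). In particular the matching accuracy is at most m/n − (1/n)·Σ_o Π_i (1 − P[i,o]). -/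
open Finset Equiv

set_option maxHeartbeats 1000000

section aux

variable {α : Type*} [Fintype α] [DecidableEq α]

lemma aux_fiber_eq (a b b' : α) :
    (univ.filter fun σ : Perm α => σ a = b).card
      = (univ.filter fun σ : Perm α => σ a = b').card := by
  apply Finset.card_bij' (fun σ _ => Equiv.swap b b' * σ) (fun σ _ => Equiv.swap b' b * σ)
  · intro σ hσ
    simp only [mem_filter, mem_univ, true_and] at hσ ⊢
    simp [Perm.mul_apply, hσ]
  · intro σ hσ
    simp only [mem_filter, mem_univ, true_and] at hσ ⊢
    simp [Perm.mul_apply, hσ]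
  · intro σ _
    simp [← mul_assoc, Equiv.swap_comm b b']
  · intro σ _
    simp [← mul_assoc, Equiv.swap_comm b' b]

lemma aux_fiber (a b : α) :
    Fintype.card α * (univ.filter fun σ : Perm α => σ a = b).card
      = Fintype.card (Equiv.Perm α) := by
  have h : (univ : Finset (Perm α)).card
      = ∑ b' : α, (univ.filter fun σ : Perm α => σ a = b').card :=
    Finset.card_eq_sum_card_fiberwise (fun x _ => mem_univ _)
  have h2 : ∑ b' : α, (univ.filter fun σ : Perm α => σ a = b').card
      = Fintype.card α * (univ.filter fun σ : Perm α => σ a = b).card := by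
    rw [Finset.sum_congr rfl fun b' _ => aux_fiber_eq a b' b]
    simp [Finset.sum_const, card_univ, mul_comm]
  rw [← h2, ← h, Fintype.card]

end aux

lemma aux_core (n m : ℕ) (P : Fin n → Fin m → ℝ) (hPnn : ∀ i o, 0 ≤ P i o)
    (w : Fin n → Fin m) (g : Fin n → Fin n) (o : Fin m) (ho : ∃ i, w i = o) :
    ∑ π : Equiv.Perm (Fin n), (∏ i, P (π i) (w i)) *
        (∑ i ∈ univ.filter fun i => w i = o, if g i = π i then (1:ℝ) else 0)
      ≤ ∑ π : Equiv.Perm (Fin n), ∏ i, P (π i) (w i) := by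
  classical
  set Q : Equiv.Perm (Fin n) → ℝ := fun π => ∏ i, P (π i) (w i) with hQ
  have hQnn : ∀ π, 0 ≤ Q π := fun π => Finset.prod_nonneg fun i _ => hPnn _ _
  haveI : Nonempty {i : Fin n // w i = o} := ⟨⟨ho.choose, ho.choose_spec⟩⟩
  set k := Fintype.card {i : Fin n // w i = o} with hk
  have hkpos : 0 < k := Fintype.card_pos
  set K := Fintype.card (Equiv.Perm {i : Fin n // w i = o}) with hK
  have hKpos : 0 < K := Fintype.card_pos
  set N : Equiv.Perm (Fin n) → ℝ := fun π =>
    ∑ i ∈ univ.filter fun i => w i = o, if g i = π i then (1:ℝ) else 0 with hN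
  -- invariance of Q under right multiplication by the stabilizer of w
  have hinv : ∀ (σ' : Equiv.Perm {i : Fin n // w i = o}) (π : Equiv.Perm (Fin n)),
      Q (π * Equiv.Perm.ofSubtype σ') = Q π := by
    intro σ' π
    have hw : ∀ i, w (Equiv.Perm.ofSubtype σ' i) = w i := by
      intro i
      by_cases h : w i = o
      · rw [Equiv.Perm.ofSubtype_apply_of_mem σ' h, (σ' ⟨i, h⟩).2, h]
      · rw [Equiv.Perm.ofSubtype_apply_of_not_mem σ' h]
    calc Q (π * Equiv.Perm.ofSubtype σ')
        = ∏ i, P (π (Equiv.Perm.ofSubtype σ' i)) (w (Equiv.Perm.ofSubtype σ' i)) := by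
          simp only [hQ, Equiv.Perm.mul_apply]
          exact Finset.prod_congr rfl fun i _ => by rw [hw]
      _ = Q π := Equiv.prod_comp (Equiv.Perm.ofSubtype σ') (fun j => P (π j) (w j))
  -- averaging identity
  have key : ∑ π : Equiv.Perm (Fin n),
        Q π * (∑ σ' : Equiv.Perm {i : Fin n // w i = o}, N (π * Equiv.Perm.ofSubtype σ'))
      = (K:ℝ) * ∑ π, Q π * N π := by
    calc ∑ π : Equiv.Perm (Fin n),
          Q π * (∑ σ' : Equiv.Perm {i : Fin n // w i = o}, N (π * Equiv.Perm.ofSubtype σ'))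
        = ∑ π : Equiv.Perm (Fin n), ∑ σ' : Equiv.Perm {i : Fin n // w i = o},
            Q π * N (π * Equiv.Perm.ofSubtype σ') := by
          simp_rw [Finset.mul_sum]
      _ = ∑ σ' : Equiv.Perm {i : Fin n // w i = o}, ∑ π : Equiv.Perm (Fin n),
            Q (π * Equiv.Perm.ofSubtype σ') * N (π * Equiv.Perm.ofSubtype σ') := by
          rw [Finset.sum_comm]
          exact Finset.sum_congr rfl fun σ' _ => Finset.sum_congr rfl fun π _ => by rw [hinv]
      _ = ∑ σ' : Equiv.Perm {i : Fin n // w i = o}, ∑ π : Equiv.Perm (Fin n), Q π * N π := by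
          refine Finset.sum_congr rfl fun σ' _ => ?_
          exact Equiv.sum_comp (Equiv.mulRight (Equiv.Perm.ofSubtype σ')) (fun π => Q π * N π)
      _ = (K:ℝ) * ∑ π, Q π * N π := by
          rw [Finset.sum_const, card_univ, ← hK, nsmul_eq_mul]
  -- counting bound
  have hcount : ∀ π : Equiv.Perm (Fin n),
      ∑ σ' : Equiv.Perm {i : Fin n // w i = o}, N (π * Equiv.Perm.ofSubtype σ') ≤ (K:ℝ) := by
    intro π
    have h1 : ∑ σ' : Equiv.Perm {i : Fin n // w i = o}, N (π * Equiv.Perm.ofSubtype σ')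
        = ∑ i ∈ univ.filter fun i => w i = o,
            ∑ σ' : Equiv.Perm {i : Fin n // w i = o},
              (if g i = π (Equiv.Perm.ofSubtype σ' i) then (1:ℝ) else 0) := by
      simp_rw [hN, Equiv.Perm.mul_apply]
      rw [Finset.sum_comm]
      convert rfl using 0
      congr! 10
    have h2 : ∀ i ∈ univ.filter fun i => w i = o,
        ∑ σ' : Equiv.Perm {i : Fin n // w i = o},
            (if g i = π (Equiv.Perm.ofSubtype σ' i) then (1:ℝ) else 0)
          ≤ (K:ℝ) / k := by
      intro i hi
      rw [mem_filter] at hi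
      have hi2 := hi.2
      have hKk : (0:ℝ) ≤ (K:ℝ) / k := by positivity
      by_cases hmem : w (π.symm (g i)) = o
      · have hiff : ∀ σ' : Equiv.Perm {i : Fin n // w i = o},
            (g i = π (Equiv.Perm.ofSubtype σ' i)) ↔ σ' ⟨i, hi2⟩ = ⟨π.symm (g i), hmem⟩ := by
          intro σ'
          rw [Equiv.Perm.ofSubtype_apply_of_mem σ' hi2]
          constructor
          · intro h
            apply Subtype.ext
            simp [h]
          · intro h
            rw [h]
            simp
        simp_rw [hiff]
        rw [Finset.sum_boole]
        rw [le_div_iff₀ (by exact_mod_cast hkpos), mul_comm]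
        have h3 := aux_fiber (α := {i : Fin n // w i = o}) ⟨i, hi2⟩ ⟨π.symm (g i), hmem⟩
        exact_mod_cast h3.le
      · have hz : ∀ σ' : Equiv.Perm {i : Fin n // w i = o},
            (if g i = π (Equiv.Perm.ofSubtype σ' i) then (1:ℝ) else 0) = 0 := by
          intro σ'
          rw [if_neg]
          intro h
          apply hmem
          rw [Equiv.Perm.ofSubtype_apply_of_mem σ' hi2] at h
          rw [h, Equiv.symm_apply_apply]
          exact (σ' ⟨i, hi2⟩).2
        rw [Finset.sum_congr rfl fun σ' _ => hz σ']
        simpa using hKk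
    have hcard : (univ.filter fun i => w i = o).card = k := (Fintype.card_subtype _).symm
    calc ∑ σ' : Equiv.Perm {i : Fin n // w i = o}, N (π * Equiv.Perm.ofSubtype σ')
        = _ := h1
      _ ≤ ∑ i ∈ univ.filter fun i => w i = o, (K:ℝ)/k := Finset.sum_le_sum h2
      _ = (univ.filter fun i => w i = o).card * ((K:ℝ)/k) := by
          rw [Finset.sum_const, nsmul_eq_mul]
      _ = (K:ℝ) := by
          rw [hcard]
          field_simp
  have h4 : (K:ℝ) * (∑ π, Q π * N π) ≤ (K:ℝ) * ∑ π, Q π := by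
    rw [← key]
    calc ∑ π : Equiv.Perm (Fin n),
          Q π * (∑ σ' : Equiv.Perm {i : Fin n // w i = o}, N (π * Equiv.Perm.ofSubtype σ'))
        ≤ ∑ π, Q π * K :=
          Finset.sum_le_sum fun π _ => mul_le_mul_of_nonneg_left (hcount π) (hQnn π)
      _ = (K:ℝ) * ∑ π, Q π := by rw [← Finset.sum_mul, mul_comm]
  exact le_of_mul_le_mul_left h4 (by exact_mod_cast hKpos)

/-- In the matching setting (uniform random permutation `π`,
independent observations `O_i ~ P[π(i),·]`), for any matching rule `φ` the
expected fraction of correct matches is at most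
`(1/n)·∑_o (1 − ∏_i (1 − P[i,o]))`, which equals the expected number of
distinct observations divided by `n`; in particular it is at most
`m/n − (1/n)·∑_o ∏_i (1 − P[i,o])`. -/
theorem stmt_6 (n m : ℕ) (hn : 0 < n)
    (P : Fin n → Fin m → ℝ)
    (hPnn : ∀ i o, 0 ≤ P i o) (hProw : ∀ i, ∑ o, P i o = 1)
    (φ : (Fin n → Fin m) → (Fin n → Fin n)) :
    ((Nat.factorial n : ℝ))⁻¹ *
      ∑ π : Equiv.Perm (Fin n), ∑ w : Fin n → Fin m,
        (∏ i, P (π i) (w i)) *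
          ((n : ℝ)⁻¹ * ∑ i, if φ w i = π i then (1 : ℝ) else 0)
      ≤ (1 / n) * ∑ o, (1 - ∏ i, (1 - P i o)) ∧
    (1 / n) * ∑ o : Fin m, (1 - ∏ i, (1 - P i o))
      = (m : ℝ) / n - (1 / n) * ∑ o, ∏ i, (1 - P i o) := by
  constructor
  ·
    have hQsum : ∀ π : Equiv.Perm (Fin n), ∑ w : Fin n → Fin m, ∏ i, P (π i) (w i) = 1 := by
      intro π
      calc ∑ w : Fin n → Fin m, ∏ i, P (π i) (w i)
          = ∑ w ∈ Fintype.piFinset (fun _ : Fin n => (univ : Finset (Fin m))),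
              ∏ i, P (π i) (w i) := by rw [Fintype.piFinset_univ]
        _ = ∏ i, ∑ v, P (π i) v :=
            (Finset.prod_univ_sum (fun _ : Fin n => (univ : Finset (Fin m)))
              (fun i v => P (π i) v)).symm
        _ = 1 := by simp [hProw]
    have hmiss : ∀ (π : Equiv.Perm (Fin n)) (o : Fin m),
        ∑ w : Fin n → Fin m, (∏ i, P (π i) (w i)) * (∏ i, if w i = o then (0:ℝ) else 1)
          = ∏ i, (1 - P (π i) o) := by
      intro π o
      calc ∑ w : Fin n → Fin m, (∏ i, P (π i) (w i)) * (∏ i, if w i = o then (0:ℝ) else 1)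
          = ∑ w : Fin n → Fin m, ∏ i, (P (π i) (w i) * if w i = o then (0:ℝ) else 1) := by
            simp_rw [Finset.prod_mul_distrib]
        _ = ∑ w ∈ Fintype.piFinset (fun _ : Fin n => (univ : Finset (Fin m))),
              ∏ i, (P (π i) (w i) * if w i = o then (0:ℝ) else 1) := by
            rw [Fintype.piFinset_univ]
        _ = ∏ i, ∑ v, (P (π i) v * if v = o then (0:ℝ) else 1) :=
            (Finset.prod_univ_sum (fun _ : Fin n => (univ : Finset (Fin m)))
              (fun i v => P (π i) v * if v = o then (0:ℝ) else 1)).symm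
        _ = ∏ i, (1 - P (π i) o) := by
            refine Finset.prod_congr rfl fun i _ => ?_
            have hv : ∀ v : Fin m, P (π i) v * (if v = o then (0:ℝ) else 1)
                = P (π i) v - (if v = o then P (π i) v else 0) := by
              intro v; by_cases h : v = o <;> simp [h]
            simp_rw [hv]
            rw [Finset.sum_sub_distrib, hProw]
            simp
    have hdecomp : ∀ (π : Equiv.Perm (Fin n)) (w : Fin n → Fin m),
        (∑ i, if φ w i = π i then (1:ℝ) else 0)
          = ∑ o : Fin m, ∑ i ∈ univ.filter fun i => w i = o,
              if φ w i = π i then (1:ℝ) else 0 :=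
      fun π w => (Finset.sum_fiberwise _ _ _).symm
    have hwo : ∀ (w : Fin n → Fin m) (o : Fin m),
        ∑ π : Equiv.Perm (Fin n), (∏ i, P (π i) (w i)) *
            (∑ i ∈ univ.filter fun i => w i = o, if φ w i = π i then (1:ℝ) else 0)
          ≤ ∑ π : Equiv.Perm (Fin n), (∏ i, P (π i) (w i)) *
              (1 - ∏ i, if w i = o then (0:ℝ) else 1) := by
      intro w o
      by_cases ho : ∃ i, w i = o
      · have hE : (1 - ∏ i, if w i = o then (0:ℝ) else 1) = 1 := by
          obtain ⟨i, hio⟩ := ho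
          have h0 : (∏ i, if w i = o then (0:ℝ) else 1) = 0 :=
            Finset.prod_eq_zero (mem_univ i) (by rw [if_pos hio])
          rw [h0]
          ring
        simp_rw [hE, mul_one]
        exact aux_core n m P hPnn w (φ w) o ho
      · push_neg at ho
        have hfil : (univ.filter fun i => w i = o) = ∅ :=
          Finset.filter_false_of_mem fun i _ => ho i
        have hE : (1 - ∏ i, if w i = o then (0:ℝ) else 1) = 0 := by
          rw [Finset.prod_congr rfl fun i _ => if_neg (ho i)]
          simp
        simp [hfil, hE]
    set X := ∑ o : Fin m, (1 - ∏ i, (1 - P i o)) with hX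
    have step1 : ∑ π : Equiv.Perm (Fin n), ∑ w : Fin n → Fin m,
        (∏ i, P (π i) (w i)) * (∑ i, if φ w i = π i then (1:ℝ) else 0)
        = ∑ w : Fin n → Fin m, ∑ o : Fin m, ∑ π : Equiv.Perm (Fin n),
            (∏ i, P (π i) (w i)) *
              (∑ i ∈ univ.filter fun i => w i = o, if φ w i = π i then (1:ℝ) else 0) := by
      rw [Finset.sum_comm]
      refine Finset.sum_congr rfl fun w _ => ?_
      refine Eq.trans ?_ Finset.sum_comm
      refine Finset.sum_congr rfl fun π _ => ?_
      rw [hdecomp π w, Finset.mul_sum]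
    have step2 : ∑ w : Fin n → Fin m, ∑ o : Fin m, ∑ π : Equiv.Perm (Fin n),
        (∏ i, P (π i) (w i)) *
          (∑ i ∈ univ.filter fun i => w i = o, if φ w i = π i then (1:ℝ) else 0)
        ≤ ∑ w : Fin n → Fin m, ∑ o : Fin m, ∑ π : Equiv.Perm (Fin n),
            (∏ i, P (π i) (w i)) * (1 - ∏ i, if w i = o then (0:ℝ) else 1) :=
      Finset.sum_le_sum fun w _ => Finset.sum_le_sum fun o _ => hwo w o
    have step3 : ∑ w : Fin n → Fin m, ∑ o : Fin m, ∑ π : Equiv.Perm (Fin n),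
        (∏ i, P (π i) (w i)) * (1 - ∏ i, if w i = o then (0:ℝ) else 1)
        = (n.factorial : ℝ) * X := by
      have e1 : ∀ π : Equiv.Perm (Fin n), ∑ o : Fin m, ∑ w : Fin n → Fin m,
          (∏ i, P (π i) (w i)) * (1 - ∏ i, if w i = o then (0:ℝ) else 1)
          = ∑ o : Fin m, (1 - ∏ i, (1 - P (π i) o)) := by
        intro π
        refine Finset.sum_congr rfl fun o _ => ?_
        have hw : ∀ w : Fin n → Fin m,
            (∏ i, P (π i) (w i)) * (1 - ∏ i, if w i = o then (0:ℝ) else 1)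
            = (∏ i, P (π i) (w i))
              - (∏ i, P (π i) (w i)) * (∏ i, if w i = o then (0:ℝ) else 1) :=
          fun w => by ring
        simp_rw [hw]
        rw [Finset.sum_sub_distrib, hQsum π, hmiss π o]
      have e2 : ∀ π : Equiv.Perm (Fin n),
          ∑ o : Fin m, (1 - ∏ i, (1 - P (π i) o)) = X := by
        intro π
        refine Finset.sum_congr rfl fun o _ => ?_
        rw [Equiv.prod_comp π (fun j => 1 - P j o)]
      calc ∑ w : Fin n → Fin m, ∑ o : Fin m, ∑ π : Equiv.Perm (Fin n),
            (∏ i, P (π i) (w i)) * (1 - ∏ i, if w i = o then (0:ℝ) else 1)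
          = ∑ w : Fin n → Fin m, ∑ π : Equiv.Perm (Fin n), ∑ o : Fin m,
              (∏ i, P (π i) (w i)) * (1 - ∏ i, if w i = o then (0:ℝ) else 1) :=
            Finset.sum_congr rfl fun w _ => Finset.sum_comm
        _ = ∑ π : Equiv.Perm (Fin n), ∑ w : Fin n → Fin m, ∑ o : Fin m,
              (∏ i, P (π i) (w i)) * (1 - ∏ i, if w i = o then (0:ℝ) else 1) :=
            Finset.sum_comm
        _ = ∑ π : Equiv.Perm (Fin n), ∑ o : Fin m, ∑ w : Fin n → Fin m,
              (∏ i, P (π i) (w i)) * (1 - ∏ i, if w i = o then (0:ℝ) else 1) :=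
            Finset.sum_congr rfl fun π _ => Finset.sum_comm
        _ = ∑ π : Equiv.Perm (Fin n), X :=
            Finset.sum_congr rfl fun π _ => (e1 π).trans (e2 π)
        _ = (n.factorial : ℝ) * X := by
            rw [Finset.sum_const, card_univ, Fintype.card_perm, Fintype.card_fin,
              nsmul_eq_mul]
    have hpull : ∀ π : Equiv.Perm (Fin n), ∑ w : Fin n → Fin m,
        (∏ i, P (π i) (w i)) * ((n:ℝ)⁻¹ * ∑ i, if φ w i = π i then (1:ℝ) else 0)
        = (n:ℝ)⁻¹ * ∑ w : Fin n → Fin m,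
            (∏ i, P (π i) (w i)) * (∑ i, if φ w i = π i then (1:ℝ) else 0) := by
      intro π
      rw [Finset.mul_sum]
      exact Finset.sum_congr rfl fun w _ => by ring
    have hS : ∑ π : Equiv.Perm (Fin n), ∑ w : Fin n → Fin m,
        (∏ i, P (π i) (w i)) * (∑ i, if φ w i = π i then (1:ℝ) else 0)
        ≤ (n.factorial : ℝ) * X := step1 ▸ (step2.trans_eq step3)
    have hfac : (0:ℝ) < (n.factorial : ℝ) := by exact_mod_cast n.factorial_pos
    have hnn : (0:ℝ) < (n:ℝ) := by exact_mod_cast hn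
    simp_rw [hpull]
    rw [← Finset.mul_sum]
    calc ((n.factorial:ℝ))⁻¹ * ((n:ℝ)⁻¹ * ∑ π : Equiv.Perm (Fin n), ∑ w : Fin n → Fin m,
          (∏ i, P (π i) (w i)) * (∑ i, if φ w i = π i then (1:ℝ) else 0))
        ≤ ((n.factorial:ℝ))⁻¹ * ((n:ℝ)⁻¹ * ((n.factorial:ℝ) * X)) := by
          apply mul_le_mul_of_nonneg_left _ (by positivity)
          exact mul_le_mul_of_nonneg_left hS (by positivity)
      _ = (1/n) * X := by
          field_simp
  · rw [Finset.sum_sub_distrib]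
    simp only [Finset.sum_const, card_univ, Fintype.card_fin, nsmul_eq_mul, mul_one]
    ring
end

section
/- Consider n = 2 users, representation space O = {u₁, u₂, a}, and representation matrix P with P[1,·] = (1/2, 0, 1/2) and P[2,·] = (0, 1/2, 1/2). Then: (a) Σ_o max_i P[i,o] = 3/2, so every prediction rule in the random-user setting has accuracy at most 3/4; (b) there exists a matching rule achieving matching accuracy exactly 7/8. Hence the optimal matching accuracy strictly exceeds the optimal random-user accuracy for this P. -/
lemma fin2_ciSup (f : Fin 2 → ℝ) : (⨆ i, f i) = max (f 0) (f 1) := by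
  apply le_antisymm
  · apply ciSup_le
    intro i
    fin_cases i
    · exact le_max_left _ _
    · exact le_max_right _ _
  · apply max_le <;>
      exact le_ciSup (Set.Finite.bddAbove (Set.finite_range f)) _

lemma perm2_univ : (Finset.univ : Finset (Equiv.Perm (Fin 2)))
    = {1, Equiv.swap 0 1} := by decide

/-- For the 2-user, 3-representation matrix
`P = [[1/2, 0, 1/2], [0, 1/2, 1/2]]`: (a) `∑_o max_i P[i,o] = 3/2`, so every
random-user prediction rule has accuracy at most `3/4`; (b) there is a matching
rule whose matching accuracy is exactly `7/8`. -/
theorem stmt_9 :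
    ∃ P : Fin 2 → Fin 3 → ℝ,
      (P 0 0 = 1/2 ∧ P 0 1 = 0 ∧ P 0 2 = 1/2 ∧
       P 1 0 = 0 ∧ P 1 1 = 1/2 ∧ P 1 2 = 1/2) ∧
      (∑ o, ⨆ i, P i o = 3 / 2) ∧
      (∀ A : Fin 2 → Fin 3 → ℝ, (∀ i o, 0 ≤ A i o) → (∀ o, ∑ i, A i o = 1) →
        (2 : ℝ)⁻¹ * ∑ i, ∑ o, P i o * A i o ≤ 3 / 4) ∧
      (∃ φ : (Fin 2 → Fin 3) → (Fin 2 → Fin 2),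
        ((Nat.factorial 2 : ℝ))⁻¹ *
          ∑ π : Equiv.Perm (Fin 2), ∑ w : Fin 2 → Fin 3,
            (∏ i, P (π i) (w i)) *
              ((2 : ℝ)⁻¹ * ∑ i, if φ w i = π i then (1 : ℝ) else 0)
          = 7 / 8) := by
  refine ⟨![![1/2, 0, 1/2], ![0, 1/2, 1/2]], ⟨rfl, rfl, rfl, rfl, rfl, rfl⟩, ?_, ?_, ?_⟩
  · rw [Fin.sum_univ_three]
    rw [fin2_ciSup, fin2_ciSup, fin2_ciSup]
    norm_num [Matrix.cons_val_two, Matrix.vecHead, Matrix.vecTail]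
  · intro A hnn hsum
    have h0 := hsum 0
    have h1 := hsum 1
    have h2 := hsum 2
    rw [Fin.sum_univ_two] at h0 h1 h2
    have := hnn 0 0; have := hnn 1 0; have := hnn 0 1; have := hnn 1 1
    have := hnn 0 2; have := hnn 1 2
    simp only [Fin.sum_univ_two, Fin.sum_univ_three]
    norm_num [Matrix.cons_val_two, Matrix.vecHead, Matrix.vecTail]
    nlinarith
  · refine ⟨fun w => if w 0 = 0 ∨ w 1 = 1 then ![0, 1]
      else if w 0 = 1 ∨ w 1 = 0 then ![1, 0] else ![0, 1], ?_⟩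
    rw [perm2_univ, Finset.sum_insert (by decide), Finset.sum_singleton]
    rw [← (piFinTwoEquiv (fun _ => Fin 3)).symm.sum_comp,
        ← (piFinTwoEquiv (fun _ => Fin 3)).symm.sum_comp]
    simp only [Fintype.sum_prod_type, Fin.sum_univ_three, Fin.sum_univ_two,
      Fin.prod_univ_two, piFinTwoEquiv, Equiv.coe_fn_symm_mk]
    have h1 : (1 : Fin 2) = Fin.succ 0 := rfl
    simp [Equiv.swap_apply_left, Equiv.swap_apply_right, Fin.cases_succ, Fin.ext_iff,
      Fin.cons_zero, Fin.cons_succ, Matrix.cons_val_two, Matrix.vecHead, Matrix.vecTail]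
    norm_num
end

section
/- For any even n, let m = 3n/2, representations O = {u₁,...,u_n} ∪ {a₁,...,a_{n/2}}, and define the n×m matrix P by P[i,o] = 1/2 if o = u_i or o = a_{⌈i/2⌉}, and 0 otherwise. Then Σ_o max_i P[i,o] = 3n/4, so every random-user prediction rule has accuracy at most 3/4, while there exists a matching rule with matching accuracy 7/8. -/
namespace Stmt10

variable {k : ℕ}

/-- unique representation of user `u` -/
def emb (k : ℕ) (u : Fin (2*k)) : Fin (3*k) :=
  ⟨(u : ℕ), by have := u.isLt; omega⟩

/-- ambiguous representation of user `u` -/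
def amb (k : ℕ) (u : Fin (2*k)) : Fin (3*k) :=
  ⟨2*k + (u : ℕ)/2, by have := u.isLt; omega⟩

/-- sibling user (same pair) -/
def sib (u : Fin (2*k)) : Fin (2*k) :=
  ⟨if (u : ℕ) % 2 = 0 then (u : ℕ) + 1 else (u : ℕ) - 1, by have := u.isLt; split <;> omega⟩

lemma sib_val (u : Fin (2*k)) :
    (sib u : ℕ) = if (u : ℕ) % 2 = 0 then (u : ℕ) + 1 else (u : ℕ) - 1 := rfl

lemma sib_ne (u : Fin (2*k)) : sib u ≠ u := by
  have := u.isLt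
  rw [Fin.ne_iff_vne, sib_val]
  split <;> omega

lemma sib_div (u : Fin (2*k)) : ((sib u : ℕ))/2 = (u : ℕ)/2 := by
  have := u.isLt; rw [sib_val]; split <;> omega

lemma sib_sib (u : Fin (2*k)) : sib (sib u) = u := by
  have := u.isLt
  apply Fin.ext
  rw [sib_val, sib_val]
  split <;> split <;> omega

lemma sib_mod (u : Fin (2*k)) : ((sib u : ℕ)) % 2 = 1 - (u : ℕ) % 2 := by
  have := u.isLt; rw [sib_val]; split <;> omega

end Stmt10

namespace Stmt10

/-- the matching rule -/
def phi (k : ℕ) (w : Fin (2*k) → Fin (3*k)) (i : Fin (2*k)) : Fin (2*k) :=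
  if h : (w i : ℕ) < 2*k then ⟨(w i : ℕ), h⟩
  else
    if ∃ i', (w i' : ℕ) = 2*((w i : ℕ) - 2*k) then
      ⟨2*((w i : ℕ) - 2*k) + 1, by have := (w i).isLt; omega⟩
    else if ∃ i', (w i' : ℕ) = 2*((w i : ℕ) - 2*k) + 1 then
      ⟨2*((w i : ℕ) - 2*k), by have := (w i).isLt; omega⟩
    else if ∀ i', w i' = w i → i ≤ i' then
      ⟨2*((w i : ℕ) - 2*k), by have := (w i).isLt; omega⟩
    else
      ⟨2*((w i : ℕ) - 2*k) + 1, by have := (w i).isLt; omega⟩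

/-- the observation vector determined by permutation `π` and choices `s` -/
def W (π : Equiv.Perm (Fin (2*k))) (s : Fin (2*k) → Bool) (i : Fin (2*k)) : Fin (3*k) :=
  if s i then emb k (π i) else amb k (π i)

lemma W_val (π : Equiv.Perm (Fin (2*k))) (s : Fin (2*k) → Bool) (i : Fin (2*k)) :
    (W π s i : ℕ) = if s i then (π i : ℕ) else 2*k + (π i : ℕ)/2 := by
  unfold W emb amb; split <;> rfl

/-- position of the sibling of user `π i` -/
def I2 (π : Equiv.Perm (Fin (2*k))) (i : Fin (2*k)) : Fin (2*k) := π.symm (sib (π i))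

lemma I2_ne (π : Equiv.Perm (Fin (2*k))) (i : Fin (2*k)) : I2 π i ≠ i := by
  intro h
  have : sib (π i) = π i := by
    have := congrArg π h
    simpa [I2] using this
  exact sib_ne _ this

end Stmt10

namespace Stmt10

lemma caseA (π : Equiv.Perm (Fin (2*k))) (s : Fin (2*k) → Bool) (i : Fin (2*k))
    (hs : s i = true) : phi k (W π s) i = π i := by
  have hv : (W π s i : ℕ) = (π i : ℕ) := by rw [W_val, hs]; simp
  have hlt : (W π s i : ℕ) < 2*k := by rw [hv]; exact (π i).isLt
  unfold phi
  rw [dif_pos hlt]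
  exact Fin.ext hv

/-- which positions carry a given unique representation value -/
lemma unique_char (π : Equiv.Perm (Fin (2*k))) (s : Fin (2*k) → Bool)
    (v : Fin (2*k)) (i' : Fin (2*k)) :
    (W π s i' : ℕ) = (v : ℕ) ↔ (s i' = true ∧ i' = π.symm v) := by
  rw [W_val]
  constructor
  · intro h
    by_cases hs : s i'
    · rw [if_pos hs] at h
      refine ⟨hs, ?_⟩
      have : π i' = v := Fin.ext h
      rw [← this]; simp
    · rw [if_neg hs] at h
      have := v.isLt
      omega
  · rintro ⟨hs, rfl⟩
    rw [if_pos hs]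
    simp

lemma caseB (π : Equiv.Perm (Fin (2*k))) (s : Fin (2*k) → Bool) (i : Fin (2*k))
    (hs : s i = false) (hs2 : s (I2 π i) = true) : phi k (W π s) i = π i := by
  have hui := (π i).isLt
  have hv : (W π s i : ℕ) = 2*k + (π i : ℕ)/2 := by rw [W_val, hs]; simp
  have hlt : ¬ (W π s i : ℕ) < 2*k := by omega
  have hj : (W π s i : ℕ) - 2*k = (π i : ℕ)/2 := by omega
  unfold phi
  rw [dif_neg hlt]
  apply Fin.ext
  rw [apply_ite (Fin.val), apply_ite (Fin.val), apply_ite (Fin.val)]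
  simp only [hj]
  -- the low member of the pair as an element of Fin (2*k)
  have hjk : (π i : ℕ)/2 < k := by omega
  set j := (π i : ℕ)/2 with hjdef
  have h2j : 2*j < 2*k := by omega
  have h2j1 : 2*j + 1 < 2*k := by omega
  by_cases hpar : (π i : ℕ) % 2 = 0
  · -- π i = 2j ; sibling = 2j+1 is present, 2j is not
    have hlow : (⟨2*j, h2j⟩ : Fin (2*k)) = π i := by apply Fin.ext; simp; omega
    have hhigh : (⟨2*j+1, h2j1⟩ : Fin (2*k)) = sib (π i) := by
      apply Fin.ext; rw [sib_val, if_pos hpar]; simp; omega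
    have hex1 : ¬ ∃ i', (W π s i' : ℕ) = 2*j := by
      rintro ⟨i', hi'⟩
      rw [show (2*j : ℕ) = ((⟨2*j, h2j⟩ : Fin (2*k)) : ℕ) from rfl,
        unique_char] at hi'
      rcases hi' with ⟨hsi', rfl⟩
      rw [hlow] at hsi'
      simp at hsi'
      rw [hsi'] at hs
      simp at hs
    have hex2 : ∃ i', (W π s i' : ℕ) = 2*j + 1 := by
      refine ⟨I2 π i, ?_⟩
      rw [show (2*j+1 : ℕ) = ((⟨2*j+1, h2j1⟩ : Fin (2*k)) : ℕ) from rfl, unique_char]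
      exact ⟨hs2, by rw [hhigh]; rfl⟩
    rw [if_neg hex1, if_pos hex2]
    omega
  · have hhigh : (⟨2*j+1, h2j1⟩ : Fin (2*k)) = π i := by apply Fin.ext; simp; omega
    have hlow : (⟨2*j, h2j⟩ : Fin (2*k)) = sib (π i) := by
      apply Fin.ext; rw [sib_val, if_neg hpar]; simp; omega
    have hex1 : ∃ i', (W π s i' : ℕ) = 2*j := by
      refine ⟨I2 π i, ?_⟩
      rw [show (2*j : ℕ) = ((⟨2*j, h2j⟩ : Fin (2*k)) : ℕ) from rfl, unique_char]
      exact ⟨hs2, by rw [hlow]; rfl⟩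
    rw [if_pos hex1]
    omega

end Stmt10

namespace Stmt10

lemma caseC (π : Equiv.Perm (Fin (2*k))) (s : Fin (2*k) → Bool) (i : Fin (2*k))
    (hs : s i = false) (hs2 : s (I2 π i) = false) :
    (phi k (W π s) i = π i) ↔ ((i < I2 π i) ↔ (π i : ℕ) % 2 = 0) := by
  have hui := (π i).isLt
  have hv : (W π s i : ℕ) = 2*k + (π i : ℕ)/2 := by rw [W_val, hs]; simp
  have hlt : ¬ (W π s i : ℕ) < 2*k := by omega
  have hj : (W π s i : ℕ) - 2*k = (π i : ℕ)/2 := by omega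
  unfold phi
  rw [dif_neg hlt]
  rw [Fin.ext_iff]
  rw [apply_ite (Fin.val), apply_ite (Fin.val), apply_ite (Fin.val)]
  simp only [hj]
  set j := (π i : ℕ)/2 with hjdef
  have h2j : 2*j < 2*k := by omega
  have h2j1 : 2*j + 1 < 2*k := by omega
  -- the two members of the pair, as positions
  have hmem : ∀ v : Fin (2*k), ((v : ℕ) = 2*j ∨ (v : ℕ) = 2*j+1) →
      π.symm v = i ∨ π.symm v = I2 π i := by
    intro v hv'
    have : v = π i ∨ v = sib (π i) := by
      have hsv := sib_val (π i)
      rcases hv' with h | h <;>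
      · by_cases hpar : (π i : ℕ) % 2 = 0
        · rcases Nat.lt_or_ge (v : ℕ) ((π i : ℕ) + 1) with _ | _
          · left; apply Fin.ext; omega
          · right; apply Fin.ext; rw [hsv]; split <;> omega
        · rcases Nat.lt_or_ge (v : ℕ) (π i : ℕ) with _ | _
          · right; apply Fin.ext; rw [hsv]; split <;> omega
          · left; apply Fin.ext; omega
    rcases this with rfl | rfl
    · left; simp
    · right; rfl
  have hex1 : ¬ ∃ i', (W π s i' : ℕ) = 2*j := by
    rintro ⟨i', hi'⟩
    rw [show (2*j : ℕ) = ((⟨2*j, h2j⟩ : Fin (2*k)) : ℕ) from rfl, unique_char] at hi'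
    rcases hi' with ⟨hsi', rfl⟩
    rcases hmem ⟨2*j, h2j⟩ (Or.inl rfl) with h | h <;> rw [h] at hsi' <;>
      simp [hs, hs2] at hsi'
  have hex2 : ¬ ∃ i', (W π s i' : ℕ) = 2*j + 1 := by
    rintro ⟨i', hi'⟩
    rw [show (2*j+1 : ℕ) = ((⟨2*j+1, h2j1⟩ : Fin (2*k)) : ℕ) from rfl, unique_char] at hi'
    rcases hi' with ⟨hsi', rfl⟩
    rcases hmem ⟨2*j+1, h2j1⟩ (Or.inr rfl) with h | h <;> rw [h] at hsi' <;>
      simp [hs, hs2] at hsi'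
  rw [if_neg hex1, if_neg hex2]
  -- characterize positions with the same ambiguous value
  have hsame : ∀ i', W π s i' = W π s i ↔ (i' = i ∨ i' = I2 π i) := by
    intro i'
    constructor
    · intro h
      have hval : (W π s i' : ℕ) = 2*k + j := by rw [h, hv]
      rw [W_val] at hval
      by_cases hsi' : s i'
      · rw [if_pos hsi'] at hval; have := (π i').isLt; omega
      · rw [if_neg hsi'] at hval
        simp only [Bool.not_eq_true] at hsi'
        have hdiv : (π i' : ℕ)/2 = j := by omega
        have : (π i' : ℕ) = 2*j ∨ (π i' : ℕ) = 2*j + 1 := by omega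
        have := hmem (π i') this
        simpa using this
    · rintro (rfl | rfl)
      · rfl
      · apply Fin.ext
        rw [W_val, if_neg (by simp [hs2]), hv]
        have : π (I2 π i) = sib (π i) := by simp [I2]
        rw [this, sib_div]
  have htie : (∀ i', W π s i' = W π s i → i ≤ i') ↔ i < I2 π i := by
    constructor
    · intro h
      have := h (I2 π i) ((hsame _).2 (Or.inr rfl))
      exact lt_of_le_of_ne this (Ne.symm (I2_ne π i))
    · intro h i' hi'
      rcases (hsame i').1 hi' with rfl | rfl
      · exact le_refl _
      · exact le_of_lt h
  by_cases hio : i < I2 π i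
  · rw [if_pos (htie.2 hio)]
    simp only [hio, true_iff]
    omega
  · rw [if_neg (fun h => hio (htie.1 h))]
    simp only [hio, false_iff]
    omega

/-- the tie-break correctness predicate -/
def Cp (π : Equiv.Perm (Fin (2*k))) (i : Fin (2*k)) : Prop :=
  (i < I2 π i) ↔ (π i : ℕ) % 2 = 0

instance (π : Equiv.Perm (Fin (2*k))) (i : Fin (2*k)) : Decidable (Cp π i) := by
  unfold Cp; infer_instance

/-- the pair-swapping involution on permutations -/
def pflip (i : Fin (2*k)) (π : Equiv.Perm (Fin (2*k))) : Equiv.Perm (Fin (2*k)) :=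
  Equiv.swap (π i) (sib (π i)) * π

lemma pflip_apply (i : Fin (2*k)) (π : Equiv.Perm (Fin (2*k))) :
    pflip i π i = sib (π i) := by
  simp [pflip, Equiv.swap_apply_left]

lemma pflip_invol (i : Fin (2*k)) : Function.Involutive (pflip i) := by
  intro π
  have h1 : pflip i π i = sib (π i) := pflip_apply i π
  show Equiv.swap (pflip i π i) (sib (pflip i π i)) * pflip i π = π
  rw [h1, sib_sib, Equiv.swap_comm]
  rw [pflip, ← mul_assoc, Equiv.swap_mul_self, one_mul]

lemma I2_pflip (i : Fin (2*k)) (π : Equiv.Perm (Fin (2*k))) :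
    I2 (pflip i π) i = I2 π i := by
  unfold I2
  rw [pflip_apply, sib_sib]
  rw [Equiv.symm_apply_eq]
  show π i = (Equiv.swap (π i) (sib (π i))) (π (π.symm (sib (π i))))
  rw [Equiv.apply_symm_apply, Equiv.swap_apply_right]

lemma Cp_pflip (i : Fin (2*k)) (π : Equiv.Perm (Fin (2*k))) :
    Cp (pflip i π) i ↔ ¬ Cp π i := by
  unfold Cp
  rw [I2_pflip, pflip_apply, sib_mod]
  have h2 : (π i : ℕ) % 2 < 2 := Nat.mod_lt _ (by norm_num)
  have hn : (1 - (π i : ℕ) % 2 = 0) ↔ ¬ ((π i : ℕ) % 2 = 0) := by omega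
  rw [hn]
  tauto

lemma sum_Cp (i : Fin (2*k)) :
    (∑ π : Equiv.Perm (Fin (2*k)), if Cp π i then (1:ℝ) else 0) * 2
      = (Nat.factorial (2*k) : ℝ) := by
  have hbij := (pflip_invol i).bijective
  have h1 : (∑ π : Equiv.Perm (Fin (2*k)), if Cp (pflip i π) i then (1:ℝ) else 0)
      = ∑ π : Equiv.Perm (Fin (2*k)), if Cp π i then (1:ℝ) else 0 :=
    Function.Bijective.sum_comp hbij (fun π => if Cp π i then (1:ℝ) else 0)
  have h2 : ∀ π : Equiv.Perm (Fin (2*k)),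
      (if Cp π i then (1:ℝ) else 0) + (if Cp (pflip i π) i then (1:ℝ) else 0) = 1 := by
    intro π
    by_cases h : Cp π i
    · rw [if_pos h, if_neg (by rw [Cp_pflip]; exact not_not_intro h)]; ring
    · rw [if_neg h, if_pos ((Cp_pflip i π).2 h)]; ring
  have h3 : (∑ π : Equiv.Perm (Fin (2*k)), if Cp π i then (1:ℝ) else 0) * 2
      = ∑ π : Equiv.Perm (Fin (2*k)),
          ((if Cp π i then (1:ℝ) else 0) + (if Cp (pflip i π) i then (1:ℝ) else 0)) := by
    rw [Finset.sum_add_distrib, h1]; ring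
  rw [h3]
  simp only [h2]
  rw [Finset.sum_const]
  simp [Fintype.card_perm]

end Stmt10

namespace Stmt10

lemma sum_pi_bool {n : ℕ} (h : Fin n → Bool → ℝ) :
    ∑ s : Fin n → Bool, ∏ t, h t (s t) = ∏ t, (h t true + h t false) := by
  rw [← Fintype.prod_sum h]
  exact Finset.prod_congr rfl (fun t _ => by simp [Fintype.sum_bool])

lemma prod_one_coord {n : ℕ} (i : Fin n) (x z : ℝ) :
    ∏ t : Fin n, (if t = i then x else z) = x * z^(n-1) := by
  rw [← Finset.mul_prod_erase Finset.univ _ (Finset.mem_univ i), if_pos rfl]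
  congr 1
  rw [Finset.prod_congr rfl (fun t ht => if_neg (Finset.mem_erase.1 ht).1),
    Finset.prod_const, Finset.card_erase_of_mem (Finset.mem_univ i),
    Finset.card_univ, Fintype.card_fin]

lemma prod_two_coords {n : ℕ} (i i2 : Fin n) (hne : i ≠ i2) (x y z : ℝ) :
    ∏ t : Fin n, (if t = i then x else if t = i2 then y else z) = x * y * z^(n-2) := by
  rw [← Finset.mul_prod_erase Finset.univ _ (Finset.mem_univ i), if_pos rfl]
  have hi2 : i2 ∈ Finset.univ.erase i := Finset.mem_erase.2 ⟨Ne.symm hne, Finset.mem_univ _⟩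
  rw [← Finset.mul_prod_erase _ _ hi2, if_neg (Ne.symm hne), if_pos rfl]
  have hcong : ∀ t ∈ (Finset.univ.erase i).erase i2,
      (if t = i then x else if t = i2 then y else z) = z := by
    intro t ht
    have h1 := (Finset.mem_erase.1 ht).1
    have h2 := (Finset.mem_erase.1 (Finset.mem_of_mem_erase ht)).1
    rw [if_neg h2, if_neg h1]
  rw [Finset.prod_congr rfl hcong, Finset.prod_const,
    Finset.card_erase_of_mem hi2, Finset.card_erase_of_mem (Finset.mem_univ i),
    Finset.card_univ, Fintype.card_fin, Nat.sub_sub]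
  norm_num
  ring

lemma sum_s_one {n : ℕ} (i : Fin n) (g : Bool → ℝ) :
    ∑ s : Fin n → Bool, g (s i) = (g true + g false) * 2^(n-1) := by
  have key : ∀ s : Fin n → Bool,
      g (s i) = ∏ t, (if t = i then g (s t) else 1) := by
    intro s
    rw [Finset.prod_eq_single_of_mem i (Finset.mem_univ i)
      (fun t _ ht => if_neg ht), if_pos rfl]
  rw [Finset.sum_congr rfl (fun s _ => key s)]
  rw [sum_pi_bool (fun t b => if t = i then g b else 1)]
  have hcong : ∀ t ∈ Finset.univ,
      ((if t = i then g true else 1) + (if t = i then g false else 1))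
        = (if t = i then g true + g false else (2:ℝ)) := by
    intro t _
    by_cases ht : t = i <;> simp [ht] <;> norm_num
  rw [Finset.prod_congr rfl hcong, prod_one_coord]

lemma sum_s_two {n : ℕ} (i i2 : Fin n) (hne : i ≠ i2) (g1 g2 : Bool → ℝ) :
    ∑ s : Fin n → Bool, g1 (s i) * g2 (s i2)
      = (g1 true + g1 false) * (g2 true + g2 false) * 2^(n-2) := by
  have key : ∀ s : Fin n → Bool,
      g1 (s i) * g2 (s i2) = ∏ t, (if t = i then g1 (s t) else if t = i2 then g2 (s t) else 1) := by
    intro s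
    rw [← Finset.mul_prod_erase Finset.univ _ (Finset.mem_univ i), if_pos rfl]
    have hi2 : i2 ∈ Finset.univ.erase i := Finset.mem_erase.2 ⟨Ne.symm hne, Finset.mem_univ _⟩
    rw [← Finset.mul_prod_erase _ _ hi2, if_neg (Ne.symm hne), if_pos rfl]
    rw [Finset.prod_eq_one (fun t ht => ?_), mul_one]
    have h1 := (Finset.mem_erase.1 ht).1
    have h2 := (Finset.mem_erase.1 (Finset.mem_of_mem_erase ht)).1
    rw [if_neg h2, if_neg h1]
  rw [Finset.sum_congr rfl (fun s _ => key s)]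
  rw [sum_pi_bool (fun t b => if t = i then g1 b else if t = i2 then g2 b else 1)]
  have hcong : ∀ t ∈ Finset.univ,
      ((if t = i then g1 true else if t = i2 then g2 true else 1)
        + (if t = i then g1 false else if t = i2 then g2 false else 1))
        = (if t = i then g1 true + g1 false else if t = i2 then g2 true + g2 false else (2:ℝ)) := by
    intro t _
    by_cases ht : t = i
    · simp [ht]
    · by_cases ht2 : t = i2 <;> simp [ht, ht2, Ne.symm hne] <;> norm_num
  rw [Finset.prod_congr rfl hcong, prod_two_coords i i2 hne]

end Stmt10

namespace Stmt10

lemma indicator_decomp (π : Equiv.Perm (Fin (2*k))) (s : Fin (2*k) → Bool) (i : Fin (2*k)) :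
    (if phi k (W π s) i = π i then (1:ℝ) else 0)
      = (if s i then (1:ℝ) else 0)
        + (if s i then (0:ℝ) else 1) * (if s (I2 π i) then (1:ℝ) else 0)
        + (if Cp π i then (1:ℝ) else 0)
            * ((if s i then (0:ℝ) else 1) * (if s (I2 π i) then (0:ℝ) else 1)) := by
  cases hsi : s i with
  | true =>
    rw [if_pos (caseA π s i hsi)]
    simp [hsi]
  | false =>
    cases hsi2 : s (I2 π i) with
    | true =>
      rw [if_pos (caseB π s i hsi hsi2)]
      simp [hsi, hsi2]
    | false =>
      have hC := caseC π s i hsi hsi2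
      by_cases hc : Cp π i
      · rw [if_pos (hC.2 hc), if_pos hc]
        simp [hsi, hsi2]
      · rw [if_neg (fun h => hc (hC.1 h)), if_neg hc]
        simp [hsi, hsi2]

lemma sum_s_total (hk : 0 < k) (π : Equiv.Perm (Fin (2*k))) (i : Fin (2*k)) :
    ∑ s : Fin (2*k) → Bool, (if phi k (W π s) i = π i then (1:ℝ) else 0)
      = 2^(2*k-1) + 2^(2*k-2) + (if Cp π i then (1:ℝ) else 0) * 2^(2*k-2) := by
  rw [Finset.sum_congr rfl (fun s _ => indicator_decomp π s i)]
  rw [Finset.sum_add_distrib, Finset.sum_add_distrib]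
  have hne : i ≠ I2 π i := Ne.symm (I2_ne π i)
  have h1 := sum_s_one i (fun b => if b then (1:ℝ) else 0)
  have h2 := sum_s_two i (I2 π i) hne (fun b => if b then (0:ℝ) else 1)
    (fun b => if b then (1:ℝ) else 0)
  have h3 := sum_s_two i (I2 π i) hne (fun b => if b then (0:ℝ) else 1)
    (fun b => if b then (0:ℝ) else 1)
  rw [show (∑ s : Fin (2*k) → Bool, if s i then (1:ℝ) else 0)
      = 2^(2*k-1) by simpa using h1]
  rw [show (∑ s : Fin (2*k) → Bool,
        (if s i then (0:ℝ) else 1) * (if s (I2 π i) then (1:ℝ) else 0))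
      = 2^(2*k-2) by simpa using h2]
  rw [← Finset.mul_sum]
  rw [show (∑ s : Fin (2*k) → Bool,
        (if s i then (0:ℝ) else 1) * (if s (I2 π i) then (0:ℝ) else 1))
      = 2^(2*k-2) by simpa using h3]

end Stmt10

namespace Stmt10

lemma P_split (P : Fin (2*k) → Fin (3*k) → ℝ)
    (hP : ∀ i o, P i o =
      if (o : ℕ) = (i : ℕ) ∨ (o : ℕ) = 2 * k + (i : ℕ) / 2 then 1/2 else 0)
    (u : Fin (2*k)) (o : Fin (3*k)) :
    P u o = (if o = emb k u then (1:ℝ)/2 else 0) + (if o = amb k u then (1:ℝ)/2 else 0) := by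
  rw [hP]
  have hu := u.isLt
  have h1 : o = emb k u ↔ (o : ℕ) = (u : ℕ) := by
    rw [Fin.ext_iff]; rfl
  have h2 : o = amb k u ↔ (o : ℕ) = 2*k + (u : ℕ)/2 := by
    rw [Fin.ext_iff]; rfl
  by_cases c1 : (o : ℕ) = (u : ℕ)
  · have c2 : ¬ (o : ℕ) = 2*k + (u : ℕ)/2 := by omega
    rw [if_pos (Or.inl c1), if_pos (h1.2 c1), if_neg (fun h => c2 (h2.1 h))]
    norm_num
  · by_cases c2 : (o : ℕ) = 2*k + (u : ℕ)/2
    · rw [if_pos (Or.inr c2), if_neg (fun h => c1 (h1.1 h)), if_pos (h2.2 c2)]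
      norm_num
    · rw [if_neg (by tauto), if_neg (fun h => c1 (h1.1 h)), if_neg (fun h => c2 (h2.1 h))]
      norm_num

lemma prod_P (P : Fin (2*k) → Fin (3*k) → ℝ)
    (hP : ∀ i o, P i o =
      if (o : ℕ) = (i : ℕ) ∨ (o : ℕ) = 2 * k + (i : ℕ) / 2 then 1/2 else 0)
    (π : Equiv.Perm (Fin (2*k))) (w : Fin (2*k) → Fin (3*k)) :
    ∏ i, P (π i) (w i)
      = ∑ s : Fin (2*k) → Bool, ∏ i, (if w i = W π s i then (1/2:ℝ) else 0) := by
  have key : ∀ i : Fin (2*k), P (π i) (w i)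
      = ∑ b : Bool, (if w i = (if b then emb k (π i) else amb k (π i)) then (1/2:ℝ) else 0) := by
    intro i
    rw [Fintype.sum_bool]
    simpa using P_split P hP (π i) (w i)
  rw [Finset.prod_congr rfl (fun i _ => key i)]
  rw [Fintype.prod_sum]
  rfl

lemma prod_ind (π : Equiv.Perm (Fin (2*k))) (s : Fin (2*k) → Bool)
    (w : Fin (2*k) → Fin (3*k)) :
    (∏ i, (if w i = W π s i then (1/2:ℝ) else 0))
      = if w = W π s then (1/2:ℝ)^(2*k) else 0 := by
  by_cases hw : w = W π s
  · rw [if_pos hw, hw]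
    simp [Finset.prod_const]
  · rw [if_neg hw]
    obtain ⟨i, hi⟩ := Function.ne_iff.1 hw
    exact Finset.prod_eq_zero (Finset.mem_univ i) (if_neg hi)

lemma collapse (π : Equiv.Perm (Fin (2*k))) (s : Fin (2*k) → Bool)
    (G : (Fin (2*k) → Fin (3*k)) → ℝ) :
    ∑ w : Fin (2*k) → Fin (3*k), (∏ i, (if w i = W π s i then (1/2:ℝ) else 0)) * G w
      = (1/2:ℝ)^(2*k) * G (W π s) := by
  have key : ∀ w : Fin (2*k) → Fin (3*k),
      (∏ i, (if w i = W π s i then (1/2:ℝ) else 0)) * G w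
        = if w = W π s then (1/2:ℝ)^(2*k) * G w else 0 := by
    intro w
    rw [prod_ind π s w, ite_mul, zero_mul]
  rw [Finset.sum_congr rfl (fun w _ => key w)]
  rw [Finset.sum_ite_eq' Finset.univ (W π s) (fun w => (1/2:ℝ)^(2*k) * G w)]
  simp

lemma inner_sum (P : Fin (2*k) → Fin (3*k) → ℝ)
    (hP : ∀ i o, P i o =
      if (o : ℕ) = (i : ℕ) ∨ (o : ℕ) = 2 * k + (i : ℕ) / 2 then 1/2 else 0)
    (π : Equiv.Perm (Fin (2*k))) (G : (Fin (2*k) → Fin (3*k)) → ℝ) :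
    ∑ w : Fin (2*k) → Fin (3*k), (∏ i, P (π i) (w i)) * G w
      = (1/2:ℝ)^(2*k) * ∑ s : Fin (2*k) → Bool, G (W π s) := by
  have key : ∀ w : Fin (2*k) → Fin (3*k),
      (∏ i, P (π i) (w i)) * G w
        = ∑ s : Fin (2*k) → Bool, (∏ i, (if w i = W π s i then (1/2:ℝ) else 0)) * G w := by
    intro w
    rw [prod_P P hP π w, Finset.sum_mul]
  rw [Finset.sum_congr rfl (fun w _ => key w), Finset.sum_comm]
  rw [Finset.sum_congr rfl (fun s _ => collapse π s G), ← Finset.mul_sum]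

end Stmt10


open Stmt10

/-- For `n = 2k` users and `m = 3k` representations, with
`P[i,o] = 1/2` iff `o = uᵢ` (encoded as `o = i`) or `o = a_{⌈i/2⌉}` (encoded as
`o = 2k + ⌊i/2⌋` for 0-based `i`), we have `∑_o max_i P[i,o] = 3n/4`, so every
random-user prediction rule has accuracy at most `3/4`, while some matching
rule achieves matching accuracy `7/8`. -/
theorem stmt_10 (k : ℕ) (hk : 0 < k)
    (P : Fin (2 * k) → Fin (3 * k) → ℝ)
    (hP : ∀ i o, P i o =
      if (o : ℕ) = (i : ℕ) ∨ (o : ℕ) = 2 * k + (i : ℕ) / 2 then 1/2 else 0) :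
    (∑ o, ⨆ i, P i o = 3 * (2 * k : ℝ) / 4) ∧
    (∀ A : Fin (2 * k) → Fin (3 * k) → ℝ,
      (∀ i o, 0 ≤ A i o) → (∀ o, ∑ i, A i o = 1) →
      ((2 * k : ℕ) : ℝ)⁻¹ * ∑ i, ∑ o, P i o * A i o ≤ 3 / 4) ∧
    (∃ φ : (Fin (2 * k) → Fin (3 * k)) → (Fin (2 * k) → Fin (2 * k)),
      ((Nat.factorial (2 * k) : ℝ))⁻¹ *
        ∑ π : Equiv.Perm (Fin (2 * k)), ∑ w : Fin (2 * k) → Fin (3 * k),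
          (∏ i, P (π i) (w i)) *
            (((2 * k : ℕ) : ℝ)⁻¹ * ∑ i, if φ w i = π i then (1 : ℝ) else 0)
        = 7 / 8) := by
  haveI : Nonempty (Fin (2*k)) := ⟨⟨0, by omega⟩⟩
  have hPle : ∀ i o, P i o ≤ 1/2 := by
    intro i o; rw [hP]; split <;> norm_num
  have hP0 : ∀ i o, 0 ≤ P i o := by
    intro i o; rw [hP]; split <;> norm_num
  refine ⟨?_, ?_, ?_⟩
  · -- Part 1
    have hsup : ∀ o : Fin (3*k), ⨆ i, P i o = 1/2 := by
      intro o
      have ho := o.isLt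
      refine le_antisymm (ciSup_le fun i => hPle i o) ?_
      by_cases h : (o : ℕ) < 2*k
      · have hw : P ⟨(o : ℕ), h⟩ o = 1/2 := by rw [hP]; rw [if_pos (Or.inl rfl)]
        calc (1/2 : ℝ) = P ⟨(o : ℕ), h⟩ o := hw.symm
        _ ≤ ⨆ i, P i o := le_ciSup (f := fun i => P i o) (Set.Finite.bddAbove (Set.finite_range _)) _
      · have hlt : 2*((o:ℕ) - 2*k) < 2*k := by omega
        have hw : P ⟨2*((o:ℕ) - 2*k), hlt⟩ o = 1/2 := by
          rw [hP]; rw [if_pos (Or.inr (by simp; omega))]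
        calc (1/2 : ℝ) = P ⟨2*((o:ℕ) - 2*k), hlt⟩ o := hw.symm
        _ ≤ ⨆ i, P i o := le_ciSup (f := fun i => P i o) (Set.Finite.bddAbove (Set.finite_range _)) _
    rw [Finset.sum_congr rfl (fun o _ => hsup o), Finset.sum_const,
      Finset.card_univ, Fintype.card_fin, nsmul_eq_mul]
    push_cast
    ring
  · -- Part 2
    intro A hA0 hA1
    have hbound : ∑ i, ∑ o, P i o * A i o ≤ 3 * k / 2 := by
      rw [Finset.sum_comm]
      calc ∑ o, ∑ i, P i o * A i o
          ≤ ∑ o : Fin (3*k), ∑ i, (1/2 : ℝ) * A i o := by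
            refine Finset.sum_le_sum fun o _ => Finset.sum_le_sum fun i _ => ?_
            exact mul_le_mul_of_nonneg_right (hPle i o) (hA0 i o)
        _ = ∑ o : Fin (3*k), (1/2 : ℝ) := by
            refine Finset.sum_congr rfl fun o _ => ?_
            rw [← Finset.mul_sum, hA1 o, mul_one]
        _ = 3 * k / 2 := by
            rw [Finset.sum_const, Finset.card_univ, Fintype.card_fin, nsmul_eq_mul]
            push_cast; ring
    have hkpos : (0:ℝ) < ((2*k : ℕ) : ℝ) := by positivity
    calc ((2 * k : ℕ) : ℝ)⁻¹ * ∑ i, ∑ o, P i o * A i o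
        ≤ ((2 * k : ℕ) : ℝ)⁻¹ * (3 * k / 2) := by
          exact mul_le_mul_of_nonneg_left hbound (by positivity)
      _ = 3 / 4 := by
          have hk' : (k : ℝ) ≠ 0 := by positivity
          push_cast
          field_simp
          ring
  · -- Part 3
    refine ⟨phi k, ?_⟩
    have step1 : ∀ π : Equiv.Perm (Fin (2*k)),
        ∑ w : Fin (2*k) → Fin (3*k), (∏ i, P (π i) (w i)) *
            (((2 * k : ℕ) : ℝ)⁻¹ * ∑ i, if phi k w i = π i then (1 : ℝ) else 0)
          = (1/2:ℝ)^(2*k) * ∑ s : Fin (2*k) → Bool,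
              (((2 * k : ℕ) : ℝ)⁻¹ * ∑ i, if phi k (W π s) i = π i then (1 : ℝ) else 0) :=
      fun π => inner_sum P hP π _
    rw [Finset.sum_congr rfl (fun π _ => step1 π)]
    have step2 : ∀ π : Equiv.Perm (Fin (2*k)),
        (∑ s : Fin (2*k) → Bool,
            (((2 * k : ℕ) : ℝ)⁻¹ * ∑ i, if phi k (W π s) i = π i then (1 : ℝ) else 0))
          = ((2 * k : ℕ) : ℝ)⁻¹ * ∑ i : Fin (2*k),
              (2^(2*k-1) + 2^(2*k-2) + (if Cp π i then (1:ℝ) else 0) * 2^(2*k-2)) := by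
      intro π
      rw [← Finset.mul_sum, Finset.sum_comm]
      congr 1
      exact Finset.sum_congr rfl (fun i _ => sum_s_total hk π i)
    have hSc : ∀ i : Fin (2*k),
        (∑ π : Equiv.Perm (Fin (2*k)), if Cp π i then (1:ℝ) else 0)
          = (Nat.factorial (2*k) : ℝ) / 2 := by
      intro i
      have := sum_Cp i
      linarith
    have step3 :
        (∑ π : Equiv.Perm (Fin (2*k)), ∑ i : Fin (2*k),
            (2^(2*k-1) + 2^(2*k-2) + (if Cp π i then (1:ℝ) else 0) * 2^(2*k-2)))
          = ((2*k : ℕ) : ℝ) * ((Nat.factorial (2*k) : ℝ) * (2^(2*k-1) + 2^(2*k-2))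
              + (Nat.factorial (2*k) : ℝ) / 2 * 2^(2*k-2)) := by
      rw [Finset.sum_comm]
      have hin : ∀ i : Fin (2*k),
          (∑ π : Equiv.Perm (Fin (2*k)),
              (2^(2*k-1) + 2^(2*k-2) + (if Cp π i then (1:ℝ) else 0) * 2^(2*k-2)))
            = (Nat.factorial (2*k) : ℝ) * (2^(2*k-1) + 2^(2*k-2))
              + (Nat.factorial (2*k) : ℝ) / 2 * 2^(2*k-2) := by
        intro i
        rw [Finset.sum_add_distrib, Finset.sum_const, ← Finset.sum_mul, hSc i,
          Finset.card_univ, Fintype.card_perm, Fintype.card_fin, nsmul_eq_mul]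
      rw [Finset.sum_congr rfl (fun i _ => hin i), Finset.sum_const,
        Finset.card_univ, Fintype.card_fin, nsmul_eq_mul]
    rw [Finset.sum_congr rfl (fun π _ => by rw [step2 π]), ← Finset.mul_sum,
      ← Finset.mul_sum, step3]
    -- final arithmetic
    obtain ⟨m, hm⟩ : ∃ m, 2*k = m + 2 := ⟨2*k - 2, by omega⟩
    have hF : (Nat.factorial (2*k) : ℝ) ≠ 0 := by
      exact_mod_cast Nat.factorial_ne_zero (2*k)
    have hx : (2:ℝ)^m ≠ 0 := by positivity
    have hkR : ((2*k : ℕ) : ℝ) ≠ 0 := by positivity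
    rw [hm]
    have e1 : (1/2:ℝ)^(m+2) = ((2:ℝ)^m * 4)⁻¹ := by
      rw [one_div, inv_pow, pow_add]; norm_num
    have e2 : (2:ℝ)^(m+2-1) = 2 * 2^m := by
      rw [show m+2-1 = m+1 from rfl, pow_succ]; ring
    have e3 : (2:ℝ)^(m+2-2) = 2^m := by norm_num
    rw [e1, e2, e3]
    field_simp
    ring
end

section
/- Let P be a random n×m row-stochastic matrix, W ∈ [m]^n a vector with W_i sampled from P[i,·] conditionally independently given P, and φ_R : [m] → [n] a prediction rule measurable with respect to W. Then E[accuracy of φ_R | W] ≤ (1/n)·Σ_{o=1}^m max_{i∈[n]} E[P[i,o] | W], and this bound is achieved by the rule that maps each o to an index i maximizing E[P[i,o] | W]. -/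
/-- Conditional (partial-information) accuracy bound.
Conditioned on the observed vector `W`, the posterior distribution of the
representation matrix `P` is a mixture of row-stochastic matrices `P t` with
weights `q t`, and `E[P|W][i,o] = ∑_t q t · P t i o`.  A `W`-measurable rule is
a fixed column-stochastic matrix `A`.  Its expected accuracy
`∑_t q t · (1/n)·∑_{i,o} P t i o · A i o` is at most
`(1/n)·∑_o max_i E[P|W][i,o]`, and some rule achieves this bound. -/
theorem stmt_11 (n m : ℕ) (hn : 0 < n)
    (ι : Type) [Fintype ι]
    (q : ι → ℝ) (hq : ∀ t, 0 ≤ q t) (hq1 : ∑ t, q t = 1)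
    (P : ι → Fin n → Fin m → ℝ)
    (hPnn : ∀ t i o, 0 ≤ P t i o) (hProw : ∀ t i, ∑ o, P t i o = 1) :
    (∀ A : Fin n → Fin m → ℝ, (∀ i o, 0 ≤ A i o) → (∀ o, ∑ i, A i o = 1) →
      ∑ t, q t * ((n : ℝ)⁻¹ * ∑ i, ∑ o, P t i o * A i o)
        ≤ (n : ℝ)⁻¹ * ∑ o, ⨆ i, ∑ t, q t * P t i o)
    ∧ ∃ A : Fin n → Fin m → ℝ, (∀ i o, 0 ≤ A i o) ∧ (∀ o, ∑ i, A i o = 1) ∧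
      ∑ t, q t * ((n : ℝ)⁻¹ * ∑ i, ∑ o, P t i o * A i o)
        = (n : ℝ)⁻¹ * ∑ o, ⨆ i, ∑ t, q t * P t i o := by
  have hnpos : (0:ℝ) < (n:ℝ) := by exact_mod_cast hn
  haveI : Nonempty (Fin n) := ⟨⟨0, hn⟩⟩
  set Q : Fin n → Fin m → ℝ := fun i o => ∑ t, q t * P t i o with hQ
  -- rewrite expected accuracy
  have key : ∀ A : Fin n → Fin m → ℝ,
      ∑ t, q t * ((n : ℝ)⁻¹ * ∑ i, ∑ o, P t i o * A i o)
        = (n : ℝ)⁻¹ * ∑ o, ∑ i, Q i o * A i o := by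
    intro A
    calc ∑ t, q t * ((n : ℝ)⁻¹ * ∑ i, ∑ o, P t i o * A i o)
        = ∑ t, ∑ i, ∑ o, (n : ℝ)⁻¹ * (q t * (P t i o * A i o)) := by
          refine Finset.sum_congr rfl fun t _ => ?_
          simp only [Finset.mul_sum]
          exact Finset.sum_congr rfl fun i _ =>
            Finset.sum_congr rfl fun o _ => by ring
      _ = ∑ i, ∑ o, ∑ t, (n : ℝ)⁻¹ * (q t * (P t i o * A i o)) := by
          rw [Finset.sum_comm]
          exact Finset.sum_congr rfl fun i _ => Finset.sum_comm
      _ = (n : ℝ)⁻¹ * ∑ o, ∑ i, Q i o * A i o := by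
          rw [Finset.mul_sum, Finset.sum_comm]
          refine Finset.sum_congr rfl fun o _ => ?_
          rw [Finset.mul_sum]
          refine Finset.sum_congr rfl fun i _ => ?_
          simp only [hQ, Finset.sum_mul, Finset.mul_sum]
          exact Finset.sum_congr rfl fun t _ => by ring
  have hQsup : ∀ i o, Q i o ≤ ⨆ j, Q j o := by
    intro i o
    exact le_ciSup (f := fun j => Q j o) (Set.Finite.bddAbove (Set.finite_range _)) i
  constructor
  · intro A hA0 hA1
    rw [key A]
    apply mul_le_mul_of_nonneg_left _ (by positivity)
    apply Finset.sum_le_sum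
    intro o _
    calc ∑ i, Q i o * A i o ≤ ∑ i, (⨆ j, Q j o) * A i o := by
          apply Finset.sum_le_sum
          intro i _
          exact mul_le_mul_of_nonneg_right (hQsup i o) (hA0 i o)
      _ = ⨆ j, Q j o := by rw [← Finset.mul_sum, hA1 o, mul_one]
  · have hex : ∀ o : Fin m, ∃ i, Q i o = ⨆ j, Q j o := by
      intro o
      obtain ⟨i, hi⟩ := Finite.exists_max (fun i => Q i o)
      exact ⟨i, le_antisymm (hQsup i o) (ciSup_le hi)⟩
    choose f hf using hex
    refine ⟨fun i o => if i = f o then 1 else 0, ?_, ?_, ?_⟩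
    · intro i o; positivity
    · intro o; simp
    · rw [key]
      congr 1
      apply Finset.sum_congr rfl
      intro o _
      rw [← hf o]
      simp [Finset.sum_ite_eq' , mul_ite]
end
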